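/- arXiv:2009.12124 — 6 statements merged into one kernel-verified Lean document; each statement's English description precedes it below -/
import Mathlib

section
/- Let (Ω, 𝔄, μ) be a measure space, let ȳ, y : Ω → ℝ be measurable, let ε ∈ (0,1) and c_s > 0. Assume that |y(x) − ȳ(x)| ≤ ε for μ-a.e. x ∈ Ω and that μ({x : 0 < |ȳ(x)| < ε}) ≤ c_s·ε. Define T := y·(𝟙_{ȳ>0, y<0} − 𝟙_{y>0, ȳ<0}). Then for μ-a.e. x ∈ Ω one has 0 ≥ T(x) ≥ −|y(x) − ȳ(x)|·𝟙_{0<|ȳ|<ε}(x), and ∫_Ω |T| dμ ≤ c_s·ε². -/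
open MeasureTheory

/-- Bounds for `T = y·(𝟙_{ȳ>0, y<0} − 𝟙_{y>0, ȳ<0})` : pointwise a.e. bound
`0 ≥ T ≥ −|y − ȳ|·𝟙_{0<|ȳ|<ε}` and the integral bound `∫ |T| ≤ c_s·ε²`. -/
theorem T_bounds
    {Ω : Type*} [MeasurableSpace Ω] (μ : Measure Ω)
    (ybar y : Ω → ℝ) (hybar : Measurable ybar) (hy : Measurable y)
    (ε c_s : ℝ) (hε0 : 0 < ε) (hε1 : ε < 1) (hcs : 0 < c_s)
    (hclose : ∀ᵐ x ∂μ, |y x - ybar x| ≤ ε)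
    (hstruct : μ {x | 0 < |ybar x| ∧ |ybar x| < ε} ≤ ENNReal.ofReal (c_s * ε)) :
    (∀ᵐ x ∂μ,
        y x * (Set.indicator {x | 0 < ybar x ∧ y x < 0} (1 : Ω → ℝ) x
            - Set.indicator {x | 0 < y x ∧ ybar x < 0} (1 : Ω → ℝ) x) ≤ 0 ∧
        -(|y x - ybar x| *
            Set.indicator {x | 0 < |ybar x| ∧ |ybar x| < ε} (1 : Ω → ℝ) x)
          ≤ y x * (Set.indicator {x | 0 < ybar x ∧ y x < 0} (1 : Ω → ℝ) x
            - Set.indicator {x | 0 < y x ∧ ybar x < 0} (1 : Ω → ℝ) x)) ∧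
    (∫⁻ x, ENNReal.ofReal
        |y x * (Set.indicator {x | 0 < ybar x ∧ y x < 0} (1 : Ω → ℝ) x
            - Set.indicator {x | 0 < y x ∧ ybar x < 0} (1 : Ω → ℝ) x)| ∂μ
      ≤ ENNReal.ofReal (c_s * ε ^ 2)) := by
  set S : Set Ω := {x | 0 < |ybar x| ∧ |ybar x| < ε} with hSdef
  have hSmeas : MeasurableSet S := by
    apply MeasurableSet.inter
    · exact measurableSet_lt measurable_const hybar.abs
    · exact measurableSet_lt hybar.abs measurable_const
  -- pointwise statement under hclose
  have hpt : ∀ x, |y x - ybar x| ≤ ε →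
      (y x * (Set.indicator {x | 0 < ybar x ∧ y x < 0} (1 : Ω → ℝ) x
          - Set.indicator {x | 0 < y x ∧ ybar x < 0} (1 : Ω → ℝ) x) ≤ 0 ∧
       -(|y x - ybar x| * Set.indicator S (1 : Ω → ℝ) x)
          ≤ y x * (Set.indicator {x | 0 < ybar x ∧ y x < 0} (1 : Ω → ℝ) x
            - Set.indicator {x | 0 < y x ∧ ybar x < 0} (1 : Ω → ℝ) x)) := by
    intro x hx
    by_cases hA : x ∈ {x | 0 < ybar x ∧ y x < 0}
    · have hB : x ∉ {x | 0 < y x ∧ ybar x < 0} := fun h => absurd h.1 (not_lt.2 hA.2.le)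
      rw [Set.indicator_of_mem hA, Set.indicator_of_notMem hB]
      have habs : |y x - ybar x| = ybar x - y x := by
        rw [abs_of_nonpos (by linarith [hA.1, hA.2])]; ring
      have hxS : x ∈ S := by
        constructor
        · rw [abs_of_pos hA.1]; exact hA.1
        · rw [abs_of_pos hA.1]; rw [habs] at hx; linarith [hA.2]
      rw [Set.indicator_of_mem hxS]
      simp only [Pi.one_apply]
      constructor
      · nlinarith [hA.2]
      · rw [habs]; nlinarith [hA.1]
    · by_cases hB : x ∈ {x | 0 < y x ∧ ybar x < 0}
      · rw [Set.indicator_of_notMem hA, Set.indicator_of_mem hB]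
        have habs : |y x - ybar x| = y x - ybar x := by
          rw [abs_of_nonneg (by linarith [hB.1, hB.2])]
        have hxS : x ∈ S := by
          constructor
          · rw [abs_of_neg hB.2]; linarith [hB.2]
          · rw [abs_of_neg hB.2]; rw [habs] at hx; linarith [hB.1]
        rw [Set.indicator_of_mem hxS]
        simp only [Pi.one_apply]
        constructor
        · nlinarith [hB.1]
        · rw [habs]; nlinarith [hB.2]
      · rw [Set.indicator_of_notMem hA, Set.indicator_of_notMem hB]
        have h1 : (0:ℝ) ≤ Set.indicator S (1 : Ω → ℝ) x :=
          Set.indicator_nonneg (fun _ _ => zero_le_one) x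
        have h2 : (0:ℝ) ≤ |y x - ybar x| := abs_nonneg _
        constructor
        · nlinarith
        · nlinarith
  have hae := hclose.mono (fun x hx => hpt x hx)
  refine ⟨hae, ?_⟩
  have hbound : ∀ᵐ x ∂μ, ENNReal.ofReal
      |y x * (Set.indicator {x | 0 < ybar x ∧ y x < 0} (1 : Ω → ℝ) x
          - Set.indicator {x | 0 < y x ∧ ybar x < 0} (1 : Ω → ℝ) x)|
      ≤ Set.indicator S (fun _ => ENNReal.ofReal ε) x := by
    filter_upwards [hclose, hae] with x hx ⟨h1, h2⟩
    have habsT : |y x * (Set.indicator {x | 0 < ybar x ∧ y x < 0} (1 : Ω → ℝ) x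
        - Set.indicator {x | 0 < y x ∧ ybar x < 0} (1 : Ω → ℝ) x)|
        ≤ ε * Set.indicator S (1 : Ω → ℝ) x := by
      rw [abs_of_nonpos h1]
      have hind : |y x - ybar x| * Set.indicator S (1 : Ω → ℝ) x
          ≤ ε * Set.indicator S (1 : Ω → ℝ) x := by
        apply mul_le_mul_of_nonneg_right hx
        exact Set.indicator_nonneg (fun _ _ => zero_le_one) x
      linarith
    calc ENNReal.ofReal _ ≤ ENNReal.ofReal (ε * Set.indicator S (1 : Ω → ℝ) x) :=
          ENNReal.ofReal_le_ofReal habsT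
      _ = Set.indicator S (fun _ => ENNReal.ofReal ε) x := by
          by_cases hxS : x ∈ S
          · rw [Set.indicator_of_mem hxS, Set.indicator_of_mem hxS]
            simp
          · rw [Set.indicator_of_notMem hxS, Set.indicator_of_notMem hxS]
            simp
  calc ∫⁻ x, ENNReal.ofReal
        |y x * (Set.indicator {x | 0 < ybar x ∧ y x < 0} (1 : Ω → ℝ) x
            - Set.indicator {x | 0 < y x ∧ ybar x < 0} (1 : Ω → ℝ) x)| ∂μ
      ≤ ∫⁻ x, Set.indicator S (fun _ => ENNReal.ofReal ε) x ∂μ :=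
        lintegral_mono_ae hbound
    _ = ENNReal.ofReal ε * μ S := lintegral_indicator_const hSmeas _
    _ ≤ ENNReal.ofReal ε * ENNReal.ofReal (c_s * ε) := by
        exact mul_le_mul_right hstruct _
    _ = ENNReal.ofReal (c_s * ε ^ 2) := by
        rw [← ENNReal.ofReal_mul hε0.le]
        ring_nf
end

section
/- Let (Ω, 𝔄, μ) be a measure space, let p, ȳ, y : Ω → ℝ be measurable, let ε ∈ (0,1), c_s > 0, and M ≥ 0. Assume: (a) |p(x)| ≤ M for μ-a.e. x; (b) p vanishes μ-a.e. on {ȳ = 0}, i.e., μ({ȳ = 0} ∩ {p ≠ 0}) = 0; (c) |y(x) − ȳ(x)| ≤ ε for μ-a.e. x; and (d) μ({x : 0 < |ȳ(x)| < ε}) ≤ c_s·ε. Then the function p·y·(𝟙_{ȳ≥0} − 𝟙_{y≥0}) is μ-integrable and |∫_Ω p·y·(𝟙_{ȳ≥0} − 𝟙_{y≥0}) dμ| ≤ c_s·M·ε². -/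
/-!
Where `ȳ` and `y` have the same sign the jump `𝟙_{ȳ≥0} − 𝟙_{y≥0}` vanishes.
Where the signs differ, `|y − ȳ| ≤ ε` forces `|y| ≤ ε` and, unless `y = 0`,
`|ȳ| < ε`; moreover `ȳ ≠ 0` unless `p = 0`. So the integrand is bounded by `M ε`
times the indicator of `{0 < |ȳ| < ε}`, a set of measure at most `c_s ε`.
-/

open MeasureTheory

theorem abs_mul_mul_sub_ite_nonneg_le {q a b M ε : ℝ} (hq : |q| ≤ M) (hab : |b - a| ≤ ε)
    (hq0 : a = 0 → q = 0) :
    |q * b * ((if 0 ≤ a then 1 else 0) - (if 0 ≤ b then 1 else 0))|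
      ≤ if 0 < |a| ∧ |a| < ε then M * ε else 0 := by
  have hM : 0 ≤ M := (abs_nonneg q).trans hq
  have hbound_nonneg : 0 ≤ if 0 < |a| ∧ |a| < ε then M * ε else 0 := by
    split_ifs with h
    exacts [mul_nonneg hM (h.1.trans h.2).le, le_rfl]
  by_cases hsign : (0 ≤ a ↔ 0 ≤ b)
  · simpa [hsign] using hbound_nonneg
  by_cases hqb : q * b = 0
  · simpa [hqb] using hbound_nonneg
  obtain ⟨hq_ne, hb_ne⟩ := mul_ne_zero_iff.mp hqb
  have ha_ne : a ≠ 0 := mt hq0 hq_ne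
  have hopposite : (0 < a ∧ b < 0) ∨ (a < 0 ∧ 0 < b) := by
    rcases ha_ne.lt_or_gt with ha | ha <;> rcases hb_ne.lt_or_gt with hb | hb <;>
      simp_all [ha.le, hb.le, not_le.2 ha, not_le.2 hb]
  rw [abs_le] at hab
  have hqb_le : |q * b| ≤ M * ε := by
    rw [abs_mul]
    refine mul_le_mul hq ?_ (abs_nonneg b) hM
    rcases hopposite with ⟨ha, hb⟩ | ⟨ha, hb⟩
    · rw [abs_of_neg hb]; linarith
    · rw [abs_of_pos hb]; linarith
  rcases hopposite with ⟨ha, hb⟩ | ⟨ha, hb⟩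
  · have hsmall : 0 < |a| ∧ |a| < ε := ⟨abs_pos.2 ha_ne, by rw [abs_of_pos ha]; linarith⟩
    rw [if_pos hsmall]
    simpa [ha.le, not_le.2 hb] using hqb_le
  · have hsmall : 0 < |a| ∧ |a| < ε := ⟨abs_pos.2 ha_ne, by rw [abs_of_neg ha]; linarith⟩
    rw [if_pos hsmall]
    simpa [not_le.2 ha, hb.le] using hqb_le

theorem integrable_and_norm_integral_le_of_ae_norm_le_indicator {α E : Type*}
    [MeasurableSpace α] [NormedAddCommGroup E] [NormedSpace ℝ E] {μ : Measure α} {f : α → E}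
    {s : Set α} {C : ℝ} (hs : MeasurableSet s) (hμs : μ s ≠ ⊤)
    (hf : AEStronglyMeasurable f μ)
    (hbound : ∀ᵐ x ∂μ, ‖f x‖ ≤ s.indicator (fun _ => C) x) :
    Integrable f μ ∧ ‖∫ x, f x ∂μ‖ ≤ μ.real s * C := by
  have hg : Integrable (s.indicator fun _ => C) μ :=
    (integrableOn_const hμs).integrable_indicator hs
  refine ⟨hg.mono' hf hbound, ?_⟩
  calc ‖∫ x, f x ∂μ‖ ≤ ∫ x, s.indicator (fun _ => C) x ∂μ :=
        norm_integral_le_of_norm_le hg hbound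
    _ = μ.real s * C := by rw [integral_indicator_const C hs, smul_eq_mul]

theorem zeta_integral_bound_general
    {Ω : Type*} [MeasurableSpace Ω] (μ : Measure Ω)
    (p ybar y : Ω → ℝ)
    (hp : Measurable p) (hybar : Measurable ybar) (hy : Measurable y)
    (ε c_s M : ℝ) (hε0 : 0 < ε) (hcs : 0 < c_s) (hM : 0 ≤ M)
    (hpbd : ∀ᵐ x ∂μ, |p x| ≤ M)
    (hvanish : μ {x | ybar x = 0 ∧ p x ≠ 0} = 0)
    (hclose : ∀ᵐ x ∂μ, |y x - ybar x| ≤ ε)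
    (hstruct : μ {x | 0 < |ybar x| ∧ |ybar x| < ε} ≤ ENNReal.ofReal (c_s * ε)) :
    Integrable (fun x =>
        p x * y x * (Set.indicator {x | 0 ≤ ybar x} (1 : Ω → ℝ) x
          - Set.indicator {x | 0 ≤ y x} (1 : Ω → ℝ) x)) μ ∧
    |∫ x, p x * y x * (Set.indicator {x | 0 ≤ ybar x} (1 : Ω → ℝ) x
          - Set.indicator {x | 0 ≤ y x} (1 : Ω → ℝ) x) ∂μ|
      ≤ c_s * M * ε ^ 2 := by
  set S := {x | 0 < |ybar x| ∧ |ybar x| < ε}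
  have hS : MeasurableSet S :=
    (measurableSet_lt measurable_const hybar.abs).inter
      (measurableSet_lt hybar.abs measurable_const)
  have hvanish_ae : ∀ᵐ x ∂μ, ybar x = 0 → p x = 0 := by
    simpa only [ae_iff, Classical.not_imp] using hvanish
  set f : Ω → ℝ := fun x => p x * y x * (Set.indicator {x | 0 ≤ ybar x} (1 : Ω → ℝ) x
    - Set.indicator {x | 0 ≤ y x} (1 : Ω → ℝ) x)
  have hbound : ∀ᵐ x ∂μ, ‖f x‖ ≤ S.indicator (fun _ => M * ε) x := by
    filter_upwards [hpbd, hclose, hvanish_ae] with x hpx hyx hvx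
    simpa [f, S, Set.indicator_apply] using abs_mul_mul_sub_ite_nonneg_le hpx hyx hvx
  have hmeas : Measurable f :=
    (hp.mul hy).mul ((measurable_one.indicator (measurableSet_le measurable_const hybar)).sub
      (measurable_one.indicator (measurableSet_le measurable_const hy)))
  obtain ⟨hint, hnorm⟩ := integrable_and_norm_integral_le_of_ae_norm_le_indicator hS
    (ne_top_of_le_ne_top ENNReal.ofReal_ne_top hstruct) hmeas.aestronglyMeasurable hbound
  have hμS : μ.real S ≤ c_s * ε := ENNReal.toReal_le_of_le_ofReal (by positivity) hstruct
  refine ⟨hint, ?_⟩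
  calc _ ≤ μ.real S * (M * ε) := hnorm
    _ ≤ c_s * ε * (M * ε) := by gcongr
    _ = c_s * M * ε ^ 2 := by ring

/-- Under the vanishing condition for `p` on `{ȳ = 0}`, the closeness condition
`|y − ȳ| ≤ ε` a.e., and the structural assumption at level `ε`, the function
`p·y·(𝟙_{ȳ≥0} − 𝟙_{y≥0})` is integrable and its integral is bounded by
`c_s·M·ε²`. -/
theorem zeta_integral_bound
    {Ω : Type*} [MeasurableSpace Ω] (μ : Measure Ω)
    (p ybar y : Ω → ℝ)
    (hp : Measurable p) (hybar : Measurable ybar) (hy : Measurable y)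
    (ε c_s M : ℝ) (hε0 : 0 < ε) (hε1 : ε < 1) (hcs : 0 < c_s) (hM : 0 ≤ M)
    (hpbd : ∀ᵐ x ∂μ, |p x| ≤ M)
    (hvanish : μ {x | ybar x = 0 ∧ p x ≠ 0} = 0)
    (hclose : ∀ᵐ x ∂μ, |y x - ybar x| ≤ ε)
    (hstruct : μ {x | 0 < |ybar x| ∧ |ybar x| < ε} ≤ ENNReal.ofReal (c_s * ε)) :
    Integrable (fun x =>
        p x * y x * (Set.indicator {x | 0 ≤ ybar x} (1 : Ω → ℝ) x
          - Set.indicator {x | 0 ≤ y x} (1 : Ω → ℝ) x)) μ ∧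
    |∫ x, p x * y x * (Set.indicator {x | 0 ≤ ybar x} (1 : Ω → ℝ) x
          - Set.indicator {x | 0 ≤ y x} (1 : Ω → ℝ) x) ∂μ|
      ≤ c_s * M * ε ^ 2 :=
  zeta_integral_bound_general μ p ybar y hp hybar hy ε c_s M hε0 hcs hM hpbd hvanish hclose hstruct
end

section
/- Let (Ω, 𝔄, μ) be a measure space, let ȳ, y, z : Ω → ℝ be measurable, let ε, κ ∈ (0,1), δ ≥ 0, c_s > 0. Assume |y − ȳ| ≤ ε μ-a.e., |z − ȳ| ≤ κ μ-a.e., |y − z| ≤ δ μ-a.e., and the structural assumption μ({x : 0 < |ȳ(x)| < η}) ≤ c_s·η for every η ∈ (0,1). Define B := z·𝟙_{ȳ>0}·(𝟙_{y<0} − 𝟙_{z<0}) − z·𝟙_{ȳ<0}·(𝟙_{y>0} − 𝟙_{z>0}). Then |B(x)| ≤ |y(x) − z(x)|·𝟙_{0<|ȳ|≤max(ε,κ)}(x) for μ-a.e. x, and ∫_Ω |B| dμ ≤ c_s·δ·max(ε,κ). -/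
open MeasureTheory

lemma key_ptwise (a b c ε κ : ℝ) (hε : 0 < ε) (hκ : 0 < κ)
    (hb : |b - a| ≤ ε) (hc : |c - a| ≤ κ) :
    |c * (if 0 < a then (1:ℝ) else 0) *
        ((if b < 0 then (1:ℝ) else 0) - (if c < 0 then (1:ℝ) else 0))
      - c * (if a < 0 then (1:ℝ) else 0) *
        ((if 0 < b then (1:ℝ) else 0) - (if 0 < c then (1:ℝ) else 0))|
    ≤ |b - c| * (if 0 < |a| ∧ |a| ≤ max ε κ then (1:ℝ) else 0) := by
  obtain ⟨hb1, hb2⟩ := abs_le.mp hb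
  obtain ⟨hc1, hc2⟩ := abs_le.mp hc
  have hm1 : ε ≤ max ε κ := le_max_left _ _
  have hm2 : κ ≤ max ε κ := le_max_right _ _
  have hrhs : (0:ℝ) ≤ |b - c| * (if 0 < |a| ∧ |a| ≤ max ε κ then (1:ℝ) else 0) := by
    apply mul_nonneg (abs_nonneg _); split <;> norm_num
  rcases lt_trichotomy a 0 with ha | ha | ha
  · rw [if_neg (by linarith : ¬ 0 < a), if_pos ha]
    have haa : |a| = -a := abs_of_neg ha
    by_cases h5 : 0 < b <;> by_cases h6 : 0 < c <;>
      simp only [h5, h6, if_true, if_false]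
    · rw [show c * 0 * ((if b < 0 then (1:ℝ) else 0) - if c < 0 then (1:ℝ) else 0)
          - c * 1 * (1 - 1) = 0 from by ring, abs_zero]
      exact hrhs
    · push_neg at h6
      have hcond : 0 < |a| ∧ |a| ≤ max ε κ := ⟨by rw [haa]; linarith, by rw [haa]; linarith⟩
      rw [if_pos hcond, mul_one,
        show c * 0 * ((if b < 0 then (1:ℝ) else 0) - if c < 0 then (1:ℝ) else 0)
          - c * (1 - 0) = -c from by ring,
        abs_neg, abs_of_nonpos h6, abs_of_pos (by linarith : (0:ℝ) < b - c)]
      linarith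
    · push_neg at h5
      have hcond : 0 < |a| ∧ |a| ≤ max ε κ := ⟨by rw [haa]; linarith, by rw [haa]; linarith⟩
      rw [if_pos hcond, mul_one,
        show c * 0 * ((if b < 0 then (1:ℝ) else 0) - if c < 0 then (1:ℝ) else 0)
          - c * (0 - 1) = c from by ring,
        abs_of_pos h6, abs_of_neg (by linarith : b - c < 0)]
      linarith
    · rw [show c * 0 * ((if b < 0 then (1:ℝ) else 0) - if c < 0 then (1:ℝ) else 0)
          - c * 1 * (0 - 0) = 0 from by ring, abs_zero]
      exact hrhs
  · rw [if_neg (show ¬ (0:ℝ) < a by simp [ha]), if_neg (show ¬ a < (0:ℝ) by simp [ha]),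
      show c * 0 * ((if b < 0 then (1:ℝ) else 0) - if c < 0 then (1:ℝ) else 0)
        - c * 0 * ((if 0 < b then (1:ℝ) else 0) - if 0 < c then (1:ℝ) else 0) = 0 from by ring,
      abs_zero]
    exact hrhs
  · rw [if_pos ha, if_neg (by linarith : ¬ a < 0)]
    have haa : |a| = a := abs_of_pos ha
    by_cases h2 : b < 0 <;> by_cases h3 : c < 0 <;>
      simp only [h2, h3, if_true, if_false]
    · rw [show c * 1 * (1 - 1)
          - c * 0 * ((if 0 < b then (1:ℝ) else 0) - if 0 < c then (1:ℝ) else 0) = 0 from by ring,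
        abs_zero]
      exact hrhs
    · push_neg at h3
      have hcond : 0 < |a| ∧ |a| ≤ max ε κ := ⟨by rw [haa]; linarith, by rw [haa]; linarith⟩
      rw [if_pos hcond, mul_one,
        show c * (1 - 0)
          - c * 0 * ((if 0 < b then (1:ℝ) else 0) - if 0 < c then (1:ℝ) else 0) = c from by ring,
        abs_of_nonneg h3, abs_of_neg (by linarith : b - c < 0)]
      linarith
    · push_neg at h2
      have hcond : 0 < |a| ∧ |a| ≤ max ε κ := ⟨by rw [haa]; linarith, by rw [haa]; linarith⟩
      rw [if_pos hcond, mul_one,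
        show c * (0 - 1)
          - c * 0 * ((if 0 < b then (1:ℝ) else 0) - if 0 < c then (1:ℝ) else 0) = -c from by ring,
        abs_neg, abs_of_neg h3, abs_of_pos (by linarith : (0:ℝ) < b - c)]
      linarith
    · rw [show c * 1 * (0 - 0)
          - c * 0 * ((if 0 < b then (1:ℝ) else 0) - if 0 < c then (1:ℝ) else 0) = 0 from by ring,
        abs_zero]
      exact hrhs

/-- Bounds for
`B = z·𝟙_{ȳ>0}·(𝟙_{y<0} − 𝟙_{z<0}) − z·𝟙_{ȳ<0}·(𝟙_{y>0} − 𝟙_{z>0})`: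
pointwise a.e. `|B| ≤ |y − z|·𝟙_{0<|ȳ|≤max(ε,κ)}` and the integral bound
`∫ |B| ≤ c_s·δ·max(ε,κ)`. -/
theorem B_bounds
    {Ω : Type*} [MeasurableSpace Ω] (μ : Measure Ω)
    (ybar y z : Ω → ℝ)
    (hybar : Measurable ybar) (hy : Measurable y) (hz : Measurable z)
    (ε κ δ c_s : ℝ) (hε0 : 0 < ε) (hε1 : ε < 1) (hκ0 : 0 < κ) (hκ1 : κ < 1)
    (hδ : 0 ≤ δ) (hcs : 0 < c_s)
    (hyclose : ∀ᵐ x ∂μ, |y x - ybar x| ≤ ε)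
    (hzclose : ∀ᵐ x ∂μ, |z x - ybar x| ≤ κ)
    (hyz : ∀ᵐ x ∂μ, |y x - z x| ≤ δ)
    (hstruct : ∀ η : ℝ, 0 < η → η < 1 →
      μ {x | 0 < |ybar x| ∧ |ybar x| < η} ≤ ENNReal.ofReal (c_s * η)) :
    (∀ᵐ x ∂μ,
        |z x * Set.indicator {x | 0 < ybar x} (1 : Ω → ℝ) x *
              (Set.indicator {x | y x < 0} (1 : Ω → ℝ) x
                - Set.indicator {x | z x < 0} (1 : Ω → ℝ) x)
          - z x * Set.indicator {x | ybar x < 0} (1 : Ω → ℝ) x *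
              (Set.indicator {x | 0 < y x} (1 : Ω → ℝ) x
                - Set.indicator {x | 0 < z x} (1 : Ω → ℝ) x)|
          ≤ |y x - z x| *
              Set.indicator {x | 0 < |ybar x| ∧ |ybar x| ≤ max ε κ}
                (1 : Ω → ℝ) x) ∧
    (∫⁻ x, ENNReal.ofReal
        |z x * Set.indicator {x | 0 < ybar x} (1 : Ω → ℝ) x *
              (Set.indicator {x | y x < 0} (1 : Ω → ℝ) x
                - Set.indicator {x | z x < 0} (1 : Ω → ℝ) x)
          - z x * Set.indicator {x | ybar x < 0} (1 : Ω → ℝ) x *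
              (Set.indicator {x | 0 < y x} (1 : Ω → ℝ) x
                - Set.indicator {x | 0 < z x} (1 : Ω → ℝ) x)| ∂μ
      ≤ ENNReal.ofReal (c_s * δ * max ε κ)) := by
  set m := max ε κ with hm
  have hm0 : 0 < m := lt_of_lt_of_le hε0 (le_max_left _ _)
  have hm1 : m < 1 := max_lt hε1 hκ1
  set S : Set Ω := {x | 0 < |ybar x| ∧ |ybar x| ≤ m} with hSdef
  have hSmeas : MeasurableSet S := by
    have h1 : Measurable fun x => |ybar x| := hybar.abs
    exact (measurableSet_lt measurable_const h1).inter (measurableSet_le h1 measurable_const)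
  have part1 : (∀ᵐ x ∂μ,
        |z x * Set.indicator {x | 0 < ybar x} (1 : Ω → ℝ) x *
              (Set.indicator {x | y x < 0} (1 : Ω → ℝ) x
                - Set.indicator {x | z x < 0} (1 : Ω → ℝ) x)
          - z x * Set.indicator {x | ybar x < 0} (1 : Ω → ℝ) x *
              (Set.indicator {x | 0 < y x} (1 : Ω → ℝ) x
                - Set.indicator {x | 0 < z x} (1 : Ω → ℝ) x)|
          ≤ |y x - z x| *
              Set.indicator {x | 0 < |ybar x| ∧ |ybar x| ≤ max ε κ}
                (1 : Ω → ℝ) x) := by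
    filter_upwards [hyclose, hzclose] with x h1 h2
    simp only [Set.indicator_apply, Set.mem_setOf_eq, Pi.one_apply]
    exact key_ptwise (ybar x) (y x) (z x) ε κ hε0 hκ0 h1 h2
  refine ⟨part1, ?_⟩
  -- measure bound
  have hfin : ∀ η : ℝ, m < η → η < 1 → μ S ≤ ENNReal.ofReal (c_s * η) := by
    intro η h1 h2
    refine le_trans (measure_mono ?_) (hstruct η (lt_trans hm0 h1) h2)
    intro x hx
    exact ⟨hx.1, lt_of_le_of_lt hx.2 h1⟩
  have hne : μ S ≠ ⊤ :=
    ne_top_of_le_ne_top ENNReal.ofReal_ne_top (hfin ((m + 1) / 2) (by linarith) (by linarith))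
  have hμS : μ S ≤ ENNReal.ofReal (c_s * m) := by
    have hr : (μ S).toReal ≤ c_s * m := by
      refine le_of_forall_pos_le_add ?_
      intro e he
      set η := min ((m + 1) / 2) (m + e / c_s) with hη
      have hη1 : m < η := lt_min (by linarith) (by nlinarith [div_pos he hcs])
      have hη2 : η < 1 := lt_of_le_of_lt (min_le_left _ _) (by linarith)
      have h3 : (μ S).toReal ≤ c_s * η :=
        ENNReal.toReal_le_of_le_ofReal (by positivity) (hfin η hη1 hη2)
      have h4 : c_s * η ≤ c_s * m + e := by
        have h5 : η ≤ m + e / c_s := min_le_right _ _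
        have h6 : c_s * η ≤ c_s * (m + e / c_s) := by nlinarith
        have h7 : c_s * (m + e / c_s) = c_s * m + e := by field_simp
        linarith
      linarith
    calc μ S = ENNReal.ofReal (μ S).toReal := (ENNReal.ofReal_toReal hne).symm
      _ ≤ ENNReal.ofReal (c_s * m) := ENNReal.ofReal_le_ofReal hr
  have hbound : ∀ᵐ x ∂μ, ENNReal.ofReal
        |z x * Set.indicator {x | 0 < ybar x} (1 : Ω → ℝ) x *
              (Set.indicator {x | y x < 0} (1 : Ω → ℝ) x
                - Set.indicator {x | z x < 0} (1 : Ω → ℝ) x)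
          - z x * Set.indicator {x | ybar x < 0} (1 : Ω → ℝ) x *
              (Set.indicator {x | 0 < y x} (1 : Ω → ℝ) x
                - Set.indicator {x | 0 < z x} (1 : Ω → ℝ) x)|
      ≤ S.indicator (fun _ => ENNReal.ofReal δ) x := by
    filter_upwards [part1, hyz] with x h1 h2
    by_cases hx : x ∈ S
    · rw [Set.indicator_of_mem hx]
      refine le_trans (ENNReal.ofReal_le_ofReal h1) (ENNReal.ofReal_le_ofReal ?_)
      rw [Set.indicator_of_mem hx, Pi.one_apply, mul_one]
      exact h2
    · rw [Set.indicator_of_notMem hx]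
      have hb0 : |z x * Set.indicator {x | 0 < ybar x} (1 : Ω → ℝ) x *
              (Set.indicator {x | y x < 0} (1 : Ω → ℝ) x
                - Set.indicator {x | z x < 0} (1 : Ω → ℝ) x)
          - z x * Set.indicator {x | ybar x < 0} (1 : Ω → ℝ) x *
              (Set.indicator {x | 0 < y x} (1 : Ω → ℝ) x
                - Set.indicator {x | 0 < z x} (1 : Ω → ℝ) x)| ≤ 0 := by
        rw [Set.indicator_of_notMem hx, mul_zero] at h1
        exact h1
      exact le_of_eq (ENNReal.ofReal_eq_zero.mpr hb0)
  calc ∫⁻ x, ENNReal.ofReal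
        |z x * Set.indicator {x | 0 < ybar x} (1 : Ω → ℝ) x *
              (Set.indicator {x | y x < 0} (1 : Ω → ℝ) x
                - Set.indicator {x | z x < 0} (1 : Ω → ℝ) x)
          - z x * Set.indicator {x | ybar x < 0} (1 : Ω → ℝ) x *
              (Set.indicator {x | 0 < y x} (1 : Ω → ℝ) x
                - Set.indicator {x | 0 < z x} (1 : Ω → ℝ) x)| ∂μ
      ≤ ∫⁻ x, S.indicator (fun _ => ENNReal.ofReal δ) x ∂μ := lintegral_mono_ae hbound
    _ = ENNReal.ofReal δ * μ S := lintegral_indicator_const hSmeas _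
    _ ≤ ENNReal.ofReal δ * ENNReal.ofReal (c_s * m) := mul_le_mul_right hμS _
    _ = ENNReal.ofReal (δ * (c_s * m)) := (ENNReal.ofReal_mul hδ).symm
    _ = ENNReal.ofReal (c_s * δ * m) := by ring_nf
end

section
/- Let (Ω, 𝔄, μ) be a measure space, let p, ȳ, y, z : Ω → ℝ be measurable, let ε, κ ∈ (0,1), δ ≥ 0, c_s > 0, M ≥ 0. Assume: (a) |p| ≤ M μ-a.e.; (b) p vanishes μ-a.e. on {ȳ = 0}, i.e., μ({ȳ = 0} ∩ {p ≠ 0}) = 0; (c) |y − ȳ| ≤ ε μ-a.e., |z − ȳ| ≤ κ μ-a.e., and |y − z| ≤ δ μ-a.e.; (d) the structural assumption μ({x : 0 < |ȳ(x)| < η}) ≤ c_s·η holds for every η ∈ (0,1). Define ζ_y := y·(𝟙_{ȳ≥0} − 𝟙_{y≥0}) and ζ_z := z·(𝟙_{ȳ≥0} − 𝟙_{z≥0}). Then p·(ζ_y − ζ_z) is μ-integrable and |∫_Ω p·(ζ_y − ζ_z) dμ| ≤ 2·c_s·M·δ·max(ε,κ). -/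
/-!
On `{ȳ ≥ 0}` the function `ζ_y` is `min y 0`, and on `{ȳ < 0}` it is `-max y 0`; both are
1-Lipschitz in `y`, so `|ζ_y − ζ_z| ≤ |y − z| ≤ δ`. Moreover `ζ_y = 0` wherever `|ȳ| ≥ ε`,
since there `y` cannot have the opposite sign to `ȳ`, and likewise `ζ_z = 0` wherever `|ȳ| ≥ κ`.
Together with the vanishing of `p` on `{ȳ = 0}`, the integrand is therefore bounded by `M δ` and
supported in `{0 < |ȳ| < max ε κ}`, a set of measure at most `c_s · max ε κ`.
-/

open MeasureTheory

/-- `zeta a b` is the paper's `ζ_y(x)` for `a = ȳ(x)`, `b = y(x)`. -/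
noncomputable def zeta (a b : ℝ) : ℝ :=
  b * ((Set.Ici 0).indicator 1 a - (Set.Ici 0).indicator 1 b)

section Zeta

variable {a b c : ℝ}

lemma zeta_of_nonneg (ha : 0 ≤ a) (b : ℝ) : zeta a b = min b 0 := by
  rcases le_or_gt 0 b with hb | hb
  · simp [zeta, ha, hb]
  · simp [zeta, ha, hb.not_ge, hb.le]

lemma zeta_of_neg (ha : a < 0) (b : ℝ) : zeta a b = -max b 0 := by
  rcases le_or_gt 0 b with hb | hb
  · simp [zeta, ha.not_ge, hb]
  · simp [zeta, ha.not_ge, hb.not_ge, hb.le]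

lemma abs_zeta_sub_zeta_le (a b c : ℝ) : |zeta a b - zeta a c| ≤ |b - c| := by
  rcases le_or_gt 0 a with ha | ha
  · simpa [zeta_of_nonneg ha] using abs_min_sub_min_le_max b 0 c 0
  · rw [zeta_of_neg ha, zeta_of_neg ha, neg_sub_neg, abs_sub_comm]
    exact abs_max_sub_max_le_abs b c 0

lemma zeta_eq_zero_of_abs_sub_le_abs (h : |b - a| ≤ |a|) : zeta a b = 0 := by
  rcases le_or_gt 0 a with ha | ha
  · rw [abs_of_nonneg ha] at h
    rw [zeta_of_nonneg ha, min_eq_right]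
    linarith [neg_abs_le (b - a)]
  · rw [abs_of_neg ha] at h
    rw [zeta_of_neg ha, max_eq_right, neg_zero]
    linarith [le_abs_self (b - a)]

lemma abs_mul_zeta_sub_zeta_le_indicator {p M δ m : ℝ} (hM : |p| ≤ M) (hp : a = 0 → p = 0)
    (hb : |b - a| ≤ m) (hc : |c - a| ≤ m) (hbc : |b - c| ≤ δ) :
    |p * (zeta a b - zeta a c)| ≤ {t : ℝ | 0 < |t| ∧ |t| < m}.indicator (fun _ => M * δ) a := by
  by_cases ha : a ∈ {t : ℝ | 0 < |t| ∧ |t| < m}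
  · rw [Set.indicator_of_mem ha, abs_mul]
    exact mul_le_mul hM ((abs_zeta_sub_zeta_le a b c).trans hbc) (abs_nonneg _)
      ((abs_nonneg p).trans hM)
  · rw [Set.indicator_of_notMem ha]
    rcases eq_or_ne a 0 with rfl | ha0
    · simp [hp rfl]
    · have hma : m ≤ |a| := le_of_not_gt fun h => ha ⟨abs_pos.mpr ha0, h⟩
      simp [zeta_eq_zero_of_abs_sub_le_abs (hb.trans hma),
        zeta_eq_zero_of_abs_sub_le_abs (hc.trans hma)]

end Zeta

lemma integrable_and_abs_integral_le_of_ae_abs_le_indicator {Ω : Type*} [MeasurableSpace Ω]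
    {μ : Measure Ω} {f : Ω → ℝ} {s : Set Ω} {C : ℝ} (hf : AEStronglyMeasurable f μ)
    (hs : MeasurableSet s) (hμs : μ s ≠ ⊤)
    (hbound : ∀ᵐ x ∂μ, |f x| ≤ s.indicator (fun _ => C) x) :
    Integrable f μ ∧ |∫ x, f x ∂μ| ≤ C * μ.real s := by
  have hg : Integrable (s.indicator fun _ => C) μ :=
    (integrable_indicator_iff hs).mpr (integrableOn_const hμs)
  have hfi : Integrable f μ := hg.mono' hf hbound
  refine ⟨hfi, ?_⟩
  calc |∫ x, f x ∂μ| ≤ ∫ x, |f x| ∂μ := abs_integral_le_integral_abs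
    _ ≤ ∫ x, s.indicator (fun _ => C) x ∂μ := integral_mono_ae hfi.abs hg hbound
    _ = C * μ.real s := by rw [integral_indicator_const _ hs, smul_eq_mul, mul_comm]

theorem zeta_difference_bound_general
    {Ω : Type*} [MeasurableSpace Ω] (μ : Measure Ω)
    (p ybar y z : Ω → ℝ)
    (hp : Measurable p) (hybar : Measurable ybar)
    (hy : Measurable y) (hz : Measurable z)
    (ε κ δ c_s M : ℝ) (hε0 : 0 < ε) (hε1 : ε < 1) (hκ1 : κ < 1)
    (hδ : 0 ≤ δ) (hcs : 0 < c_s) (hM : 0 ≤ M)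
    (hpbd : ∀ᵐ x ∂μ, |p x| ≤ M)
    (hvanish : μ {x | ybar x = 0 ∧ p x ≠ 0} = 0)
    (hyclose : ∀ᵐ x ∂μ, |y x - ybar x| ≤ ε)
    (hzclose : ∀ᵐ x ∂μ, |z x - ybar x| ≤ κ)
    (hyz : ∀ᵐ x ∂μ, |y x - z x| ≤ δ)
    (hstruct : ∀ η : ℝ, 0 < η → η < 1 →
      μ {x | 0 < |ybar x| ∧ |ybar x| < η} ≤ ENNReal.ofReal (c_s * η)) :
    Integrable (fun x =>
        p x * (y x * (Set.indicator {x | 0 ≤ ybar x} (1 : Ω → ℝ) x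
              - Set.indicator {x | 0 ≤ y x} (1 : Ω → ℝ) x)
          - z x * (Set.indicator {x | 0 ≤ ybar x} (1 : Ω → ℝ) x
              - Set.indicator {x | 0 ≤ z x} (1 : Ω → ℝ) x))) μ ∧
    |∫ x, p x * (y x * (Set.indicator {x | 0 ≤ ybar x} (1 : Ω → ℝ) x
              - Set.indicator {x | 0 ≤ y x} (1 : Ω → ℝ) x)
          - z x * (Set.indicator {x | 0 ≤ ybar x} (1 : Ω → ℝ) x
              - Set.indicator {x | 0 ≤ z x} (1 : Ω → ℝ) x)) ∂μ|
      ≤ 2 * c_s * M * δ * max ε κ := by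
  set m := max ε κ
  have hm0 : 0 < m := lt_max_of_lt_left hε0
  set T : Set ℝ := {t | 0 < |t| ∧ |t| < m}
  have hT : MeasurableSet T :=
    (measurableSet_lt measurable_const measurable_abs).inter
      (measurableSet_lt measurable_abs measurable_const)
  have hμT : μ (ybar ⁻¹' T) ≤ ENNReal.ofReal (c_s * m) := hstruct m hm0 (max_lt hε1 hκ1)
  have hp0 : ∀ᵐ x ∂μ, ybar x = 0 → p x = 0 := by
    simp_rw [ae_iff, Classical.not_imp]
    exact hvanish
  have hbound : ∀ᵐ x ∂μ, |p x * (zeta (ybar x) (y x) - zeta (ybar x) (z x))|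
      ≤ (ybar ⁻¹' T).indicator (fun _ => M * δ) x := by
    filter_upwards [hpbd, hp0, hyclose, hzclose, hyz] with x hpx hp0x hyx hzx hyzx
    exact abs_mul_zeta_sub_zeta_le_indicator hpx hp0x (hyx.trans (le_max_left ε κ))
      (hzx.trans (le_max_right ε κ)) hyzx
  have hmeas : Measurable fun x => p x * (zeta (ybar x) (y x) - zeta (ybar x) (z x)) := by
    unfold zeta
    fun_prop (disch := exact measurableSet_Ici)
  -- the integrand of the statement is this function, up to unfolding `zeta`
  obtain ⟨hint, habs⟩ := integrable_and_abs_integral_le_of_ae_abs_le_indicator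
    hmeas.aestronglyMeasurable (hybar hT) (ne_top_of_le_ne_top ENNReal.ofReal_ne_top hμT) hbound
  refine ⟨hint, habs.trans ?_⟩
  have hμT' : μ.real (ybar ⁻¹' T) ≤ c_s * m := ENNReal.toReal_le_of_le_ofReal (by positivity) hμT
  calc M * δ * μ.real (ybar ⁻¹' T) ≤ M * δ * (c_s * m) :=
        mul_le_mul_of_nonneg_left hμT' (mul_nonneg hM hδ)
    _ ≤ 2 * c_s * M * δ * m := by
        nlinarith [mul_nonneg (mul_nonneg (mul_nonneg hcs.le hM) hδ) hm0.le]

/-- The weak-invariance estimate: with `ζ_y = y·(𝟙_{ȳ≥0} − 𝟙_{y≥0})` and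
`ζ_z = z·(𝟙_{ȳ≥0} − 𝟙_{z≥0})`, the function `p·(ζ_y − ζ_z)` is integrable and
`|∫ p·(ζ_y − ζ_z)| ≤ 2·c_s·M·δ·max(ε,κ)`. -/
theorem zeta_difference_bound
    {Ω : Type*} [MeasurableSpace Ω] (μ : Measure Ω)
    (p ybar y z : Ω → ℝ)
    (hp : Measurable p) (hybar : Measurable ybar)
    (hy : Measurable y) (hz : Measurable z)
    (ε κ δ c_s M : ℝ) (hε0 : 0 < ε) (hε1 : ε < 1) (hκ0 : 0 < κ) (hκ1 : κ < 1)
    (hδ : 0 ≤ δ) (hcs : 0 < c_s) (hM : 0 ≤ M)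
    (hpbd : ∀ᵐ x ∂μ, |p x| ≤ M)
    (hvanish : μ {x | ybar x = 0 ∧ p x ≠ 0} = 0)
    (hyclose : ∀ᵐ x ∂μ, |y x - ybar x| ≤ ε)
    (hzclose : ∀ᵐ x ∂μ, |z x - ybar x| ≤ κ)
    (hyz : ∀ᵐ x ∂μ, |y x - z x| ≤ δ)
    (hstruct : ∀ η : ℝ, 0 < η → η < 1 →
      μ {x | 0 < |ybar x| ∧ |ybar x| < η} ≤ ENNReal.ofReal (c_s * η)) :
    Integrable (fun x =>
        p x * (y x * (Set.indicator {x | 0 ≤ ybar x} (1 : Ω → ℝ) x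
              - Set.indicator {x | 0 ≤ y x} (1 : Ω → ℝ) x)
          - z x * (Set.indicator {x | 0 ≤ ybar x} (1 : Ω → ℝ) x
              - Set.indicator {x | 0 ≤ z x} (1 : Ω → ℝ) x))) μ ∧
    |∫ x, p x * (y x * (Set.indicator {x | 0 ≤ ybar x} (1 : Ω → ℝ) x
              - Set.indicator {x | 0 ≤ y x} (1 : Ω → ℝ) x)
          - z x * (Set.indicator {x | 0 ≤ ybar x} (1 : Ω → ℝ) x
              - Set.indicator {x | 0 ≤ z x} (1 : Ω → ℝ) x)) ∂μ|
      ≤ 2 * c_s * M * δ * max ε κ :=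
  zeta_difference_bound_general μ p ybar y z hp hybar hy hz ε κ δ c_s M hε0 hε1 hκ1 hδ hcs hM hpbd
    hvanish hyclose hzclose hyz hstruct
end

section
/- Let X be a type, M ≥ 0, and F : ℝ × X → ℝ a function with |F(t, h)| ≤ M for all t > 0 and all h ∈ X. For h ∈ X define Q̃(h) := inf{ liminf_{n→∞} F(t_n, h) : (t_n) ∈ c_0⁺ } (a real number, since all values lie in [−M, M]). Then for every sequence (h_n) in X there exists a sequence (r_n) of positive real numbers with r_n → 0 such that liminf_{n→∞} F(r_n, h_n) ≤ liminf_{n→∞} Q̃(h_n). -/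
/-!
Write `Q̃(h)` as the infimum of the sequential lower limits of `F(·, h)` at `0⁺`. For each `n`,
some sequence `t → 0⁺` has lower limit below `Q̃(h_n) + 1/(n+1)`, so `F(t_m, h_n)` drops below
that level for infinitely many `m`, in particular for some `t_m < 1/(n+1)`; call that time `r_n`.
Then `r_n → 0` and `F(r_n, h_n) ≤ Q̃(h_n) + 1/(n+1)`, and an error tending to zero does not
change a lower limit.
-/

open Filter Set Topology

theorem liminf_le_liminf_of_le_add_of_tendsto_zero {ι : Type*} {l : Filter ι} [l.NeBot]
    {u v e : ι → ℝ} (hu : IsBoundedUnder (· ≥ ·) l u) (hv : IsBoundedUnder (· ≥ ·) l v)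
    (hv' : IsCoboundedUnder (· ≥ ·) l v) (he : Tendsto e l (𝓝 0))
    (huv : ∀ i, u i ≤ e i + v i) :
    liminf u l ≤ liminf v l :=
  calc liminf u l ≤ liminf (e + v) l :=
        liminf_le_liminf (Eventually.of_forall huv) hu
          (isCoboundedUnder_ge_add he.isBoundedUnder_le hv')
    _ ≤ limsup e l + liminf v l :=
        liminf_add_le he.isBoundedUnder_ge he.isBoundedUnder_le hv hv'
    _ = liminf v l := by rw [he.limsup_eq, zero_add]

/-- `Q̃(h)` is the infimum of this set for `f = F(·, h)`. -/
def seqLiminfsAtZero (f : ℝ → ℝ) : Set ℝ :=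
  {q | ∃ t : ℕ → ℝ, (∀ m, 0 < t m) ∧ Tendsto t atTop (𝓝 0) ∧
    q = liminf (fun m => f (t m)) atTop}

section seqLiminfsAtZero

variable {f : ℝ → ℝ} {M : ℝ}

theorem seqLiminfsAtZero_nonempty (f : ℝ → ℝ) : (seqLiminfsAtZero f).Nonempty :=
  ⟨_, fun m : ℕ => 1 / ((m : ℝ) + 1), fun _ => Nat.one_div_pos_of_nat,
    tendsto_one_div_add_atTop_nhds_zero_nat, rfl⟩

theorem liminf_comp_mem_Icc_of_abs_le (hbd : ∀ t, 0 < t → |f t| ≤ M) {t : ℕ → ℝ}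
    (ht : ∀ m, 0 < t m) : liminf (fun m => f (t m)) atTop ∈ Icc (-M) M := by
  have hlo : ∀ m, -M ≤ f (t m) := fun m => (abs_le.mp (hbd _ (ht m))).1
  have hhi : ∀ m, f (t m) ≤ M := fun m => (abs_le.mp (hbd _ (ht m))).2
  have hco : IsCoboundedUnder (· ≥ ·) atTop fun m => f (t m) :=
    (isBoundedUnder_of ⟨M, hhi⟩).isCoboundedUnder_ge
  exact ⟨le_liminf_of_le hco (Eventually.of_forall hlo),
    (liminf_le_limsup (isBoundedUnder_of ⟨M, hhi⟩) (isBoundedUnder_of ⟨-M, hlo⟩)).trans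
      (limsup_le_of_le (isBoundedUnder_of ⟨-M, hlo⟩).isCoboundedUnder_le
        (Eventually.of_forall hhi))⟩

theorem mem_Icc_of_mem_seqLiminfsAtZero (hbd : ∀ t, 0 < t → |f t| ≤ M) {q : ℝ}
    (hq : q ∈ seqLiminfsAtZero f) : q ∈ Icc (-M) M := by
  obtain ⟨t, ht, -, rfl⟩ := hq
  exact liminf_comp_mem_Icc_of_abs_le hbd ht

theorem sInf_seqLiminfsAtZero_mem_Icc (hbd : ∀ t, 0 < t → |f t| ≤ M) :
    sInf (seqLiminfsAtZero f) ∈ Icc (-M) M := by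
  have hlo : -M ∈ lowerBounds (seqLiminfsAtZero f) := fun _ hq =>
    (mem_Icc_of_mem_seqLiminfsAtZero hbd hq).1
  obtain ⟨q, hq⟩ := seqLiminfsAtZero_nonempty f
  exact ⟨le_csInf ⟨q, hq⟩ hlo,
    (csInf_le ⟨-M, hlo⟩ hq).trans (mem_Icc_of_mem_seqLiminfsAtZero hbd hq).2⟩

theorem exists_mem_Ioo_lt_sInf_seqLiminfsAtZero_add (hbd : ∀ t, 0 < t → |f t| ≤ M)
    {δ ε : ℝ} (hδ : 0 < δ) (hε : 0 < ε) :
    ∃ ρ ∈ Ioo 0 δ, f ρ < sInf (seqLiminfsAtZero f) + ε := by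
  obtain ⟨_, ⟨t, ht, ht0, rfl⟩, hlt⟩ :=
    exists_lt_of_csInf_lt (seqLiminfsAtZero_nonempty f) (lt_add_of_pos_right _ hε)
  have hco : IsCoboundedUnder (· ≥ ·) atTop fun m => f (t m) :=
    (isBoundedUnder_of ⟨M, fun m => (abs_le.mp (hbd _ (ht m))).2⟩).isCoboundedUnder_ge
  obtain ⟨m, hfm, hmδ⟩ :=
    ((frequently_lt_of_liminf_lt hco hlt).and_eventually (ht0.eventually (gt_mem_nhds hδ))).exists
  exact ⟨t m, ⟨ht m, hmδ⟩, hfm⟩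

end seqLiminfsAtZero

theorem diagonal_extraction_general {X : Type*} (M : ℝ)
    (F : ℝ × X → ℝ)
    (hbd : ∀ (t : ℝ), 0 < t → ∀ h : X, |F (t, h)| ≤ M)
    (hn : ℕ → X) :
    ∃ r : ℕ → ℝ, (∀ n, 0 < r n) ∧ Tendsto r atTop (nhds 0) ∧
      liminf (fun n => F (r n, hn n)) atTop ≤
        liminf (fun n =>
          sInf {q : ℝ | ∃ t : ℕ → ℝ,
            (∀ m, 0 < t m) ∧ Tendsto t atTop (nhds 0) ∧
            q = liminf (fun m => F (t m, hn n)) atTop}) atTop := by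
  have hbd' (n : ℕ) : ∀ t, 0 < t → |F (t, hn n)| ≤ M := fun t ht => hbd t ht (hn n)
  have hQ (n : ℕ) := sInf_seqLiminfsAtZero_mem_Icc (hbd' n)
  choose r hr hrF using fun n : ℕ =>
    exists_mem_Ioo_lt_sInf_seqLiminfsAtZero_add (hbd' n) Nat.one_div_pos_of_nat
      Nat.one_div_pos_of_nat
  have hinv : Tendsto (fun n : ℕ => 1 / ((n : ℝ) + 1)) atTop (𝓝 0) :=
    tendsto_one_div_add_atTop_nhds_zero_nat
  have hFr : IsBoundedUnder (· ≥ ·) atTop fun n => F (r n, hn n) :=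
    isBoundedUnder_of ⟨-M, fun n => (abs_le.mp (hbd' n _ (hr n).1)).1⟩
  refine ⟨r, fun n => (hr n).1,
    squeeze_zero (fun n => (hr n).1.le) (fun n => (hr n).2.le) hinv, ?_⟩
  exact liminf_le_liminf_of_le_add_of_tendsto_zero hFr
    (isBoundedUnder_of ⟨-M, fun n => (hQ n).1⟩)
    (isBoundedUnder_of ⟨M, fun n => (hQ n).2⟩).isCoboundedUnder_ge hinv
    fun n => (hrF n).le.trans_eq (add_comm _ _)

/-- Diagonal-extraction lemma: with `F` uniformly bounded for positive times and
`Q̃(h) = inf{ liminf_n F(t_n, h) : (t_n) ∈ c_0⁺ }`, for every sequence `(h_n)`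
there is a null sequence `(r_n)` of positive reals with
`liminf_n F(r_n, h_n) ≤ liminf_n Q̃(h_n)`. -/
theorem diagonal_extraction {X : Type*} (M : ℝ) (hM : 0 ≤ M)
    (F : ℝ × X → ℝ)
    (hbd : ∀ (t : ℝ), 0 < t → ∀ h : X, |F (t, h)| ≤ M)
    (hn : ℕ → X) :
    ∃ r : ℕ → ℝ, (∀ n, 0 < r n) ∧ Tendsto r atTop (nhds 0) ∧
      liminf (fun n => F (r n, hn n)) atTop ≤
        liminf (fun n =>
          sInf {q : ℝ | ∃ t : ℕ → ℝ,
            (∀ m, 0 < t m) ∧ Tendsto t atTop (nhds 0) ∧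
            q = liminf (fun m => F (t m, hn n)) atTop}) atTop :=
  diagonal_extraction_general M F hbd hn
end

section
/- Let (Ω, 𝔄, μ) be a σ-finite measure space, let α, β ∈ L²(μ) be real-valued with β(x) − α(x) ≥ γ for μ-a.e. x and some constant γ > 0, and let U_ad := {u ∈ L²(μ) : α(x) ≤ u(x) ≤ β(x) for μ-a.e. x}. For u ∈ U_ad define the radial cone R(U_ad; u) := {h ∈ L²(μ) : ∃ t̄ > 0 such that u + t·h ∈ U_ad for all t ∈ [0, t̄]}, the contingent (Bouligand) tangent cone T(U_ad; u) := {h ∈ L²(μ) : ∃ sequences t_n → 0⁺ and h_n → h in L²(μ) with u + t_n·h_n ∈ U_ad for all n}, the normal cone N(U_ad; u) := {w ∈ L²(μ) : ∫_Ω w·h dμ ≤ 0 for all h ∈ T(U_ad; u)}, and for w ∈ L²(μ) the annihilator w^⊥ := {v ∈ L²(μ) : ∫_Ω w·v dμ = 0}. Then U_ad is polyhedric: for every u ∈ U_ad and every w ∈ N(U_ad; u), the L²-closure of R(U_ad; u) ∩ w^⊥ equals T(U_ad; u) ∩ w^⊥. -/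
open MeasureTheory Filter

variable {Ω : Type*} [MeasurableSpace Ω] {μ : Measure Ω}

/-- The admissible set of box-constrained controls in `L²(μ)`. -/
def Uad (α β : Lp ℝ 2 μ) : Set (Lp ℝ 2 μ) :=
  {u | ∀ᵐ x ∂μ, (α : Ω → ℝ) x ≤ (u : Ω → ℝ) x ∧ (u : Ω → ℝ) x ≤ (β : Ω → ℝ) x}

/-- The radial cone to `K` at `u`. -/
def radialCone (K : Set (Lp ℝ 2 μ)) (u : Lp ℝ 2 μ) : Set (Lp ℝ 2 μ) :=
  {h | ∃ tbar : ℝ, 0 < tbar ∧ ∀ t ∈ Set.Icc (0 : ℝ) tbar, u + t • h ∈ K}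

/-- The contingent (Bouligand) tangent cone to `K` at `u`. -/
def contingentCone (K : Set (Lp ℝ 2 μ)) (u : Lp ℝ 2 μ) : Set (Lp ℝ 2 μ) :=
  {h | ∃ (t : ℕ → ℝ) (hn : ℕ → Lp ℝ 2 μ),
    (∀ n, 0 < t n) ∧ Tendsto t atTop (nhds 0) ∧ Tendsto hn atTop (nhds h) ∧
    ∀ n, u + t n • hn n ∈ K}

/-- The normal cone to `K` at `u`. -/
def normalCone (K : Set (Lp ℝ 2 μ)) (u : Lp ℝ 2 μ) : Set (Lp ℝ 2 μ) :=
  {w | ∀ h ∈ contingentCone K u, ∫ x, (w : Ω → ℝ) x * (h : Ω → ℝ) x ∂μ ≤ 0}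

/-- The annihilator of `w` in `L²(μ)`. -/
def annihilator (w : Lp ℝ 2 μ) : Set (Lp ℝ 2 μ) :=
  {v | ∫ x, (w : Ω → ℝ) x * (v : Ω → ℝ) x ∂μ = 0}

/-!
Testing the normal cone with the radial directions `c • 𝟙_S` shows that `w ≤ 0` a.e. where
`u < β` and `w ≥ 0` a.e. where `α < u`, while a contingent direction `h` satisfies `h ≥ 0` a.e.
on `{u = α}` and `h ≤ 0` a.e. on `{u = β}`. Hence `w * h ≤ 0` a.e., so `h ∈ w^⊥` forces
`w * h = 0` a.e. Restricting `h` to the sets where a step of length `1 / (n + 1)` stays in the box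
gives radial directions, still orthogonal to `w`, which converge to `h` in `L²` by dominated
convergence. Conversely, the closure of the radial cone lies in the contingent cone and `w^⊥` is
closed.
-/

open scoped ENNReal Topology

lemma integral_mul_eq_inner (w v : Lp ℝ 2 μ) :
    ∫ x, w x * v x ∂μ = inner ℝ w v := by
  simp [MeasureTheory.L2.inner_def, mul_comm]

lemma isClosed_annihilator (w : Lp ℝ 2 μ) : IsClosed (annihilator w) := by
  simp only [annihilator, integral_mul_eq_inner]
  exact isClosed_eq (continuous_const.inner continuous_id) continuous_const

lemma closure_radialCone_subset_contingentCone (K : Set (Lp ℝ 2 μ)) (u : Lp ℝ 2 μ) :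
    closure (radialCone K u) ⊆ contingentCone K u := by
  intro v hv
  obtain ⟨y, hy, hyv⟩ := mem_closure_iff_seq_limit.mp hv
  choose tbar htbar hmem using hy
  have ht (n : ℕ) : 0 < min (tbar n) (1 / (n + 1)) := lt_min (htbar n) Nat.one_div_pos_of_nat
  refine ⟨_, y, ht, ?_, hyv, fun n => hmem n _ ⟨(ht n).le, min_le_left _ _⟩⟩
  exact squeeze_zero (fun n => (ht n).le) (fun n => min_le_right _ _)
    tendsto_one_div_add_atTop_nhds_zero_nat

lemma radialCone_subset_contingentCone (K : Set (Lp ℝ 2 μ)) (u : Lp ℝ 2 μ) :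
    radialCone K u ⊆ contingentCone K u :=
  subset_closure.trans (closure_radialCone_subset_contingentCone K u)

lemma closure_radialCone_inter_annihilator_subset (K : Set (Lp ℝ 2 μ)) (u w : Lp ℝ 2 μ) :
    closure (radialCone K u ∩ annihilator w) ⊆ contingentCone K u ∩ annihilator w :=
  closure_inter_subset.trans <| Set.inter_subset_inter
    (closure_radialCone_subset_contingentCone K u) (isClosed_annihilator w).closure_subset

lemma Convex.mem_radialCone_of_add_smul_mem {K : Set (Lp ℝ 2 μ)} (hK : Convex ℝ K)
    {u g : Lp ℝ 2 μ} (hu : u ∈ K) {s : ℝ} (hs : 0 < s) (hsg : u + s • g ∈ K) :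
    g ∈ radialCone K u := by
  refine ⟨s, hs, fun t ⟨ht0, hts⟩ => ?_⟩
  have := hK.add_smul_mem hu hsg ⟨div_nonneg ht0 hs.le, (div_le_one hs).mpr hts⟩
  rwa [smul_smul, div_mul_cancel₀ t hs.ne'] at this

lemma coeFn_add_smul (u g : Lp ℝ 2 μ) (t : ℝ) :
    ⇑(u + t • g) =ᵐ[μ] fun x => u x + t * g x := by
  filter_upwards [Lp.coeFn_add u (t • g), Lp.coeFn_smul t g] with x hadd hsmul
  rw [hadd, Pi.add_apply, hsmul, Pi.smul_apply, smul_eq_mul]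

lemma add_smul_mem_Uad_iff {α β u g : Lp ℝ 2 μ} {t : ℝ} :
    u + t • g ∈ Uad α β ↔ ∀ᵐ x ∂μ, α x ≤ u x + t * g x ∧ u x + t * g x ≤ β x :=
  eventually_congr <| (coeFn_add_smul u g t).mono fun x hx => by rw [hx]

lemma convex_Uad (α β : Lp ℝ 2 μ) : Convex ℝ (Uad α β) := by
  intro f hf g hg a b ha hb hab
  filter_upwards [hf, hg, Lp.coeFn_add (a • f) (b • g), Lp.coeFn_smul a f, Lp.coeFn_smul b g]
    with x hfx hgx hadd haf hbg
  rw [hadd, Pi.add_apply, haf, hbg]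
  exact convex_Icc (α x) (β x) hfx hgx ha hb hab

lemma ae_sign_of_mem_contingentCone_Uad {α β u h : Lp ℝ 2 μ}
    (hh : h ∈ contingentCone (Uad α β) u) :
    ∀ᵐ x ∂μ, (u x = α x → 0 ≤ h x) ∧ (u x = β x → h x ≤ 0) := by
  obtain ⟨t, g, ht, -, hg, hmem⟩ := hh
  obtain ⟨φ, -, hφ⟩ := (tendstoInMeasure_of_tendsto_Lp hg).exists_seq_tendsto_ae
  have hbox : ∀ᵐ x ∂μ, ∀ n, α x ≤ u x + t n * g n x ∧ u x + t n * g n x ≤ β x :=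
    ae_all_iff.mpr fun n => add_smul_mem_Uad_iff.mp (hmem n)
  filter_upwards [hbox, hφ] with x hx hlim
  refine ⟨fun hα => ge_of_tendsto' hlim fun n => ?_, fun hβ => le_of_tendsto' hlim fun n => ?_⟩
  · exact (mul_nonneg_iff_of_pos_left (ht _)).mp (by linarith [(hx (φ n)).1])
  · exact nonpos_of_mul_nonpos_right (by linarith [(hx (φ n)).2]) (ht _)

lemma MeasureTheory.MemLp.ae_nonneg_of_forall_setIntegral_nonneg {p : ℝ≥0∞} (hp1 : 1 ≤ p)
    (hp : p ≠ ∞) {f : Ω → ℝ} (hf : MemLp f p μ)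
    (hf_nonneg : ∀ s, MeasurableSet s → μ s < ∞ → 0 ≤ ∫ x in s, f x ∂μ) : 0 ≤ᵐ[μ] f :=
  (hf.aefinStronglyMeasurable (one_pos.trans_le hp1).ne' hp).ae_nonneg_of_forall_setIntegral_nonneg
    (fun _ _ hs => (integrableOn_Lp_of_measure_ne_top (hf.toLp f) hp1 hs.ne).congr_fun_ae
      (ae_restrict_of_ae hf.coeFn_toLp)) hf_nonneg

lemma indicatorConstLp_mem_radialCone_Uad {α β u : Lp ℝ 2 μ} (hu : u ∈ Uad α β) {s : Set Ω}
    (hs : MeasurableSet s) (hμs : μ s ≠ ∞) {c : ℝ}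
    (hc : ∀ x ∈ s, α x ≤ u x + c ∧ u x + c ≤ β x) :
    indicatorConstLp 2 hs hμs c ∈ radialCone (Uad α β) u := by
  refine (convex_Uad α β).mem_radialCone_of_add_smul_mem hu one_pos (add_smul_mem_Uad_iff.mpr ?_)
  filter_upwards [hu, indicatorConstLp_coeFn (p := 2) (hs := hs) (hμs := hμs) (c := c)]
    with x hux hx
  rw [hx, one_mul]
  by_cases hxs : x ∈ s
  · simpa [hxs] using hc x hxs
  · simpa [hxs] using hux

lemma ae_mul_nonpos_of_mem_normalCone_Uad {α β u w : Lp ℝ 2 μ} (hu : u ∈ Uad α β)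
    (hw : w ∈ normalCone (Uad α β) u) (c : ℝ) :
    ∀ᵐ x ∂μ, α x ≤ u x + c → u x + c ≤ β x → c * w x ≤ 0 := by
  have hm (f : Lp ℝ 2 μ) : Measurable f := (Lp.stronglyMeasurable f).measurable
  set C := {x | α x ≤ u x + c ∧ u x + c ≤ β x}
  have hC : MeasurableSet C := (measurableSet_le (hm α) ((hm u).add_const c)).inter
    (measurableSet_le ((hm u).add_const c) (hm β))
  have hneg : 0 ≤ᵐ[μ] C.indicator fun x => -(c * w x) := by
    refine (((Lp.memLp w).const_mul c).neg.indicator hC).ae_nonneg_of_forall_setIntegral_nonneg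
      one_le_two ENNReal.ofNat_ne_top fun s hs hμs => ?_
    have hμ : μ (s ∩ C) ≠ ∞ := ((measure_mono Set.inter_subset_left).trans_lt hμs).ne
    have := hw _ <| radialCone_subset_contingentCone _ _ <|
      indicatorConstLp_mem_radialCone_Uad hu (hs.inter hC) hμ fun x hx => hx.2
    rw [integral_mul_eq_inner, real_inner_comm, L2.inner_indicatorConstLp_eq_setIntegral_inner]
      at this
    rw [setIntegral_indicator hC, Pi.neg_def, integral_neg]
    simpa [mul_comm] using this
  filter_upwards [hneg] with x hx hα hβ
  simpa [Set.indicator_of_mem (show x ∈ C from ⟨hα, hβ⟩)] using hx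

lemma ae_sign_of_mem_normalCone_Uad {α β u w : Lp ℝ 2 μ} (hu : u ∈ Uad α β)
    (hw : w ∈ normalCone (Uad α β) u) :
    ∀ᵐ x ∂μ, (u x < β x → w x ≤ 0) ∧ (α x < u x → 0 ≤ w x) := by
  have hup := ae_all_iff.mpr fun n : ℕ =>
    ae_mul_nonpos_of_mem_normalCone_Uad hu hw (1 / (n + 1))
  have hdown := ae_all_iff.mpr fun n : ℕ =>
    ae_mul_nonpos_of_mem_normalCone_Uad hu hw (-(1 / (n + 1)))
  filter_upwards [hu, hup, hdown] with x hux hxup hxdown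
  have hpos (n : ℕ) : (0 : ℝ) < 1 / (n + 1) := Nat.one_div_pos_of_nat
  refine ⟨fun hlt => ?_, fun hlt => ?_⟩
  · obtain ⟨n, hn⟩ := exists_nat_one_div_lt (sub_pos.mpr hlt)
    exact nonpos_of_mul_nonpos_right (hxup n (by linarith [hpos n]) (by linarith)) (hpos n)
  · obtain ⟨n, hn⟩ := exists_nat_one_div_lt (sub_pos.mpr hlt)
    have := hxdown n (by linarith) (by linarith [hpos n])
    exact (mul_nonneg_iff_of_pos_left (hpos n)).mp (by linarith)

lemma ae_mul_nonpos_of_mem_normalCone_Uad_of_mem_contingentCone {α β u w h : Lp ℝ 2 μ}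
    (hu : u ∈ Uad α β) (hw : w ∈ normalCone (Uad α β) u)
    (hh : h ∈ contingentCone (Uad α β) u) : ∀ᵐ x ∂μ, w x * h x ≤ 0 := by
  filter_upwards [hu, ae_sign_of_mem_normalCone_Uad hu hw, ae_sign_of_mem_contingentCone_Uad hh]
    with x ⟨hαu, huβ⟩ ⟨hw_nonpos, hw_nonneg⟩ ⟨hh_nonneg, hh_nonpos⟩
  rcases hαu.eq_or_lt with hαu | hαu <;> rcases huβ.eq_or_lt with huβ | huβ
  · rw [le_antisymm (hh_nonpos huβ) (hh_nonneg hαu.symm), mul_zero]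
  · exact mul_nonpos_of_nonpos_of_nonneg (hw_nonpos huβ) (hh_nonneg hαu.symm)
  · exact mul_nonpos_of_nonneg_of_nonpos (hw_nonneg hαu) (hh_nonpos huβ)
  · rw [le_antisymm (hw_nonpos huβ) (hw_nonneg hαu), zero_mul]

lemma ae_mul_eq_zero_of_mem_annihilator {α β u w h : Lp ℝ 2 μ}
    (hu : u ∈ Uad α β) (hw : w ∈ normalCone (Uad α β) u)
    (hh : h ∈ contingentCone (Uad α β) u) (hann : h ∈ annihilator w) :
    ∀ᵐ x ∂μ, w x * h x = 0 := by
  have hint : Integrable (fun x => -(w x * h x)) μ := by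
    simpa [mul_comm] using (L2.integrable_inner (𝕜 := ℝ) w h).neg
  have hzero := (integral_eq_zero_iff_of_nonneg_ae
    ((ae_mul_nonpos_of_mem_normalCone_Uad_of_mem_contingentCone hu hw hh).mono fun x hx => by
      simpa using hx) hint).mp (by rw [integral_neg, hann, neg_zero])
  filter_upwards [hzero] with x hx
  simpa using hx

lemma tendsto_eLpNorm_zero_of_dominated {E : Type*} [NormedAddCommGroup E] {p : ℝ≥0∞}
    (hp0 : p ≠ 0) (hp : p ≠ ∞) {F : ℕ → Ω → E} {bound : Ω → ℝ}
    (hF : ∀ n, AEStronglyMeasurable (F n) μ) (hbound_memLp : MemLp bound p μ)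
    (h_bound : ∀ n, ∀ᵐ x ∂μ, ‖F n x‖ ≤ bound x)
    (h_lim : ∀ᵐ x ∂μ, Tendsto (fun n => F n x) atTop (𝓝 0)) :
    Tendsto (fun n => eLpNorm (F n) p μ) atTop (𝓝 0) := by
  have hp_pos : 0 < p.toReal := ENNReal.toReal_pos hp0 hp
  have hlint : Tendsto (fun n => ∫⁻ x, ‖F n x‖ₑ ^ p.toReal ∂μ) atTop (𝓝 0) := by
    simpa only [lintegral_zero] using
      tendsto_lintegral_of_dominated_convergence' (f := fun _ => 0) (fun x => ‖bound x‖ₑ ^ p.toReal)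
      (fun n => (hF n).enorm.pow_const _)
      (fun n => (h_bound n).mono fun x hx => ENNReal.rpow_le_rpow
        (enorm_le_iff_norm_le.mpr (hx.trans (Real.le_norm_self _))) hp_pos.le)
      (lintegral_rpow_enorm_lt_top_of_eLpNorm_lt_top hp0 hp hbound_memLp.2).ne
      (h_lim.mono fun x hx => by
        simpa [ENNReal.zero_rpow_of_pos hp_pos] using hx.enorm.ennrpow_const p.toReal)
  simp_rw [eLpNorm_eq_lintegral_rpow_enorm_toReal hp0 hp]
  simpa [ENNReal.zero_rpow_of_pos (inv_pos.mpr hp_pos)] using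
    hlint.ennrpow_const (1 / p.toReal)

lemma tendsto_toLp_indicator {E : Type*} [NormedAddCommGroup E] {p : ℝ≥0∞} [Fact (1 ≤ p)]
    (hp : p ≠ ∞) (f : Lp E p μ) {s : ℕ → Set Ω} (hs : ∀ n, MeasurableSet (s n))
    (h_mem : ∀ᵐ x ∂μ, ∀ᶠ n in atTop, x ∈ s n) :
    Tendsto (fun n => ((Lp.memLp f).indicator (hs n)).toLp _) atTop (𝓝 f) := by
  rw [Lp.tendsto_Lp_iff_tendsto_eLpNorm']
  have hcongr (n : ℕ) : eLpNorm (⇑(((Lp.memLp f).indicator (hs n)).toLp _) - (f : Ω → E)) p μ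
      = eLpNorm ((s n).indicator f - (f : Ω → E)) p μ :=
    eLpNorm_congr_ae ((MemLp.coeFn_toLp _).sub EventuallyEq.rfl)
  simp_rw [hcongr]
  refine tendsto_eLpNorm_zero_of_dominated (one_pos.trans_le Fact.out).ne' hp
    (fun n => ((Lp.aestronglyMeasurable f).indicator (hs n)).sub (Lp.aestronglyMeasurable f))
    (Lp.memLp f).norm (fun n => Eventually.of_forall fun x => ?_) (h_mem.mono fun x hx => ?_)
  · by_cases hx : x ∈ s n <;> simp [hx]
  · exact tendsto_const_nhds.congr' (hx.mono fun n hn => by simp [hn])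

lemma eventually_le_natCast_add_one_mul {a b : ℝ} (ha : 0 ≤ a) (hb : a = 0 → b ≤ 0) :
    ∀ᶠ n : ℕ in atTop, b ≤ (n + 1) * a := by
  rcases ha.eq_or_lt with ha | ha
  · exact Eventually.of_forall fun n => by rw [← ha, mul_zero]; exact hb ha.symm
  · obtain ⟨N, hN⟩ := exists_nat_ge (b / a)
    filter_upwards [eventually_ge_atTop N] with n hn
    calc b ≤ N * a := (div_le_iff₀ ha).mp hN
      _ ≤ (n + 1) * a := by gcongr; exact_mod_cast Nat.le_succ_of_le hn

/-- The set where a step of length `1 / (n + 1)` from `u` in direction `h` stays between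
`α` and `β`. -/
def boxStepSet (α β u h : Lp ℝ 2 μ) (n : ℕ) : Set Ω :=
  {x | -((n + 1) * (u x - α x)) ≤ h x ∧ h x ≤ (n + 1) * (β x - u x)}

lemma measurableSet_boxStepSet (α β u h : Lp ℝ 2 μ) (n : ℕ) :
    MeasurableSet (boxStepSet α β u h n) := by
  have hm (f : Lp ℝ 2 μ) : Measurable f := (Lp.stronglyMeasurable f).measurable
  exact (measurableSet_le (((hm u).sub (hm α)).const_mul _).neg (hm h)).inter
    (measurableSet_le (hm h) (((hm β).sub (hm u)).const_mul _))

lemma indicator_boxStepSet_mem_radialCone {α β u : Lp ℝ 2 μ} (hu : u ∈ Uad α β)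
    (h : Lp ℝ 2 μ) (n : ℕ) :
    ((Lp.memLp h).indicator (measurableSet_boxStepSet α β u h n)).toLp _
      ∈ radialCone (Uad α β) u := by
  have hn : (0 : ℝ) < n + 1 := n.cast_add_one_pos
  refine (convex_Uad α β).mem_radialCone_of_add_smul_mem hu (inv_pos.mpr hn)
    (add_smul_mem_Uad_iff.mpr ?_)
  filter_upwards [hu, ((Lp.memLp h).indicator (measurableSet_boxStepSet α β u h n)).coeFn_toLp]
    with x ⟨hαu, huβ⟩ hx
  rw [hx]
  by_cases hxs : x ∈ boxStepSet α β u h n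
  · rw [Set.indicator_of_mem hxs]
    constructor
    · linarith [(le_inv_mul_iff₀ hn).mpr (by linarith [hxs.1] : (n + 1) * -(u x - α x) ≤ h x)]
    · linarith [(inv_mul_le_iff₀ hn).mpr hxs.2]
  · rw [Set.indicator_of_notMem hxs, mul_zero, add_zero]
    exact ⟨hαu, huβ⟩

lemma ae_eventually_mem_boxStepSet {α β u h : Lp ℝ 2 μ} (hu : u ∈ Uad α β)
    (hh : h ∈ contingentCone (Uad α β) u) :
    ∀ᵐ x ∂μ, ∀ᶠ n in atTop, x ∈ boxStepSet α β u h n := by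
  filter_upwards [hu, ae_sign_of_mem_contingentCone_Uad hh] with x ⟨hαu, huβ⟩ ⟨hh_nonneg, hh_nonpos⟩
  filter_upwards [eventually_le_natCast_add_one_mul (sub_nonneg.mpr hαu)
      fun h0 => neg_nonpos.mpr (hh_nonneg (sub_eq_zero.mp h0)),
    eventually_le_natCast_add_one_mul (sub_nonneg.mpr huβ)
      fun h0 => hh_nonpos (sub_eq_zero.mp h0).symm] with n h1 h2
  exact ⟨neg_le.mp h1, h2⟩

lemma indicator_mem_annihilator {w h : Lp ℝ 2 μ} (hwh : ∀ᵐ x ∂μ, w x * h x = 0) {s : Set Ω}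
    (hs : MeasurableSet s) : ((Lp.memLp h).indicator hs).toLp _ ∈ annihilator w := by
  refine integral_eq_zero_of_ae ?_
  filter_upwards [hwh, ((Lp.memLp h).indicator hs).coeFn_toLp] with x hx hind
  by_cases hxs : x ∈ s <;> simp [hind, hxs, hx]

lemma contingentCone_Uad_inter_annihilator_subset_closure {α β u w : Lp ℝ 2 μ}
    (hu : u ∈ Uad α β) (hw : w ∈ normalCone (Uad α β) u) :
    contingentCone (Uad α β) u ∩ annihilator w
      ⊆ closure (radialCone (Uad α β) u ∩ annihilator w) := by
  rintro h ⟨hh, hann⟩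
  have hwh := ae_mul_eq_zero_of_mem_annihilator hu hw hh hann
  exact mem_closure_of_tendsto
    (tendsto_toLp_indicator ENNReal.ofNat_ne_top h (measurableSet_boxStepSet α β u h)
      (ae_eventually_mem_boxStepSet hu hh))
    (Eventually.of_forall fun n => ⟨indicator_boxStepSet_mem_radialCone hu h n,
      indicator_mem_annihilator hwh (measurableSet_boxStepSet α β u h n)⟩)

theorem Uad_polyhedric_general
    (α β : Lp ℝ 2 μ)
    (u : Lp ℝ 2 μ) (hu : u ∈ Uad α β)
    (w : Lp ℝ 2 μ) (hw : w ∈ normalCone (Uad α β) u) :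
    closure (radialCone (Uad α β) u ∩ annihilator w)
      = contingentCone (Uad α β) u ∩ annihilator w :=
  (closure_radialCone_inter_annihilator_subset _ u w).antisymm
    (contingentCone_Uad_inter_annihilator_subset_closure hu hw)

/-- Polyhedricity of the admissible set of box-constrained controls: for every
`u ∈ U_ad` and every `w` in the normal cone to `U_ad` at `u`, the `L²`-closure
of `R(U_ad; u) ∩ w^⊥` equals `T(U_ad; u) ∩ w^⊥`. -/
theorem Uad_polyhedric [SigmaFinite μ]
    (α β : Lp ℝ 2 μ) (γ : ℝ) (hγ : 0 < γ)
    (hαβ : ∀ᵐ x ∂μ, γ ≤ (β : Ω → ℝ) x - (α : Ω → ℝ) x)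
    (u : Lp ℝ 2 μ) (hu : u ∈ Uad α β)
    (w : Lp ℝ 2 μ) (hw : w ∈ normalCone (Uad α β) u) :
    closure (radialCone (Uad α β) u ∩ annihilator w)
      = contingentCone (Uad α β) u ∩ annihilator w :=
  Uad_polyhedric_general α β u hu w hw
end
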